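/- Let Z : I → S be a geodesic on a surface S with unit tangent T, χ a smooth deformation, and z = χ∘Z the convected curve on χ(S). Then z is a geodesic of χ(S) if and only if for every s₀ ∈ I and every tangent vector U ∈ T_{Z(s₀)}S, L[U⊗T⊗T]|_{s=s₀} = 0, where L is the tensor with components L_{αβδ} = (γ^μ_{βδ} − Γ^μ_{βδ}) g_{μα} (the difference of Christoffel symbols of the deformed and reference surfaces contracted with the pullback metric). -/
import Mathlib


/-- Partial derivative in the `α`-th coordinate direction of a function on `ℝ²`. -/
noncomputable def pd (α : Fin 2) (f : (Fin 2 → ℝ) → ℝ) (p : Fin 2 → ℝ) : ℝ :=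
  fderiv ℝ f p (Pi.single α 1)

/-- First fundamental form (induced metric) of a parameterized surface `Y : ℝ² → ℝ³`. -/
noncomputable def metricOf (Y : (Fin 2 → ℝ) → (Fin 3 → ℝ)) (p : Fin 2 → ℝ) :
    Matrix (Fin 2) (Fin 2) ℝ :=
  Matrix.of fun α β => ∑ i : Fin 3, pd α (fun q => Y q i) p * pd β (fun q => Y q i) p

/-- Christoffel symbols (second kind) of the induced metric of `Y`. -/
noncomputable def christoffel (Y : (Fin 2 → ℝ) → (Fin 3 → ℝ)) (p : Fin 2 → ℝ)
    (μ β δ : Fin 2) : ℝ :=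
  (1 / 2) * ∑ ν : Fin 2, (metricOf Y p)⁻¹ μ ν *
    (pd β (fun q => metricOf Y q ν δ) p + pd δ (fun q => metricOf Y q ν β) p
      - pd ν (fun q => metricOf Y q β δ) p)

/-- The tensor `L_{αβδ} = (γ^μ_{βδ} - Γ^μ_{βδ}) g_{μα}`: the difference of the Christoffel
symbols of the deformed and reference surfaces, contracted with the pullback metric. -/
noncomputable def LtensorChristoffel (Y : (Fin 2 → ℝ) → (Fin 3 → ℝ))
    (χ : (Fin 3 → ℝ) → (Fin 3 → ℝ)) (p : Fin 2 → ℝ) (α β δ : Fin 2) : ℝ :=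
  ∑ μ : Fin 2, (christoffel (fun q => χ (Y q)) p μ β δ - christoffel Y p μ β δ)
    * metricOf (fun q => χ (Y q)) p μ α

/-- the convected curve `z = χ ∘ Y ∘ θ` is a geodesic of the deformed surface
iff `L[U⊗T⊗T] = 0` for all `s₀` and all tangent vectors `U`. -/
theorem stmt18 (Y : (Fin 2 → ℝ) → (Fin 3 → ℝ)) (χ : (Fin 3 → ℝ) → (Fin 3 → ℝ))
    (θ : ℝ → (Fin 2 → ℝ))
    (hY : ContDiff ℝ (⊤ : ℕ∞) Y) (hχ : ContDiff ℝ (⊤ : ℕ∞) χ) (hθ : ContDiff ℝ (⊤ : ℕ∞) θ)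
    (hχinv : Function.Bijective χ)
    (hG : ∀ p, (metricOf Y p).PosDef)
    (hg : ∀ p, (metricOf (fun q => χ (Y q)) p).PosDef)
    (hgeo : ∀ s : ℝ, ∀ μ : Fin 2,
      deriv (fun t => deriv (fun u => θ u μ) t) s
        + ∑ β : Fin 2, ∑ δ : Fin 2, christoffel Y (θ s) μ β δ
            * deriv (fun u => θ u β) s * deriv (fun u => θ u δ) s = 0)
    (hunit : ∀ s : ℝ, ∑ α : Fin 2, ∑ β : Fin 2,
      metricOf Y (θ s) α β * deriv (fun u => θ u α) s * deriv (fun u => θ u β) s = 1) :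
    (∀ s : ℝ, ∀ μ : Fin 2,
      deriv (fun t => deriv (fun u => θ u μ) t) s
        + ∑ β : Fin 2, ∑ δ : Fin 2, christoffel (fun q => χ (Y q)) (θ s) μ β δ
            * deriv (fun u => θ u β) s * deriv (fun u => θ u δ) s = 0)
    ↔
    (∀ s₀ : ℝ, ∀ U : Fin 2 → ℝ,
      ∑ α : Fin 2, ∑ β : Fin 2, ∑ δ : Fin 2,
        LtensorChristoffel Y χ (θ s₀) α β δ
          * U α * deriv (fun u => θ u β) s₀ * deriv (fun u => θ u δ) s₀ = 0) := by
  constructor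
  · intro h s₀ U
    have hD : ∀ μ : Fin 2, ∑ β : Fin 2, ∑ δ : Fin 2,
        (christoffel (fun q => χ (Y q)) (θ s₀) μ β δ - christoffel Y (θ s₀) μ β δ)
          * deriv (fun u => θ u β) s₀ * deriv (fun u => θ u δ) s₀ = 0 := by
      intro μ
      have h1 := h s₀ μ
      have h2 := hgeo s₀ μ
      simp only [Fin.sum_univ_two] at h1 h2 ⊢
      linear_combination h1 - h2
    have e0 := hD 0
    have e1 := hD 1
    simp only [Fin.sum_univ_two, LtensorChristoffel] at e0 e1 ⊢
    linear_combination
      (U 0 * metricOf (fun q => χ (Y q)) (θ s₀) 0 0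
        + U 1 * metricOf (fun q => χ (Y q)) (θ s₀) 0 1) * e0
      + (U 0 * metricOf (fun q => χ (Y q)) (θ s₀) 1 0
        + U 1 * metricOf (fun q => χ (Y q)) (θ s₀) 1 1) * e1
  · intro h s μ
    set g : Matrix (Fin 2) (Fin 2) ℝ := metricOf (fun q => χ (Y q)) (θ s) with hgdef
    set D : Fin 2 → ℝ := fun ν => ∑ β : Fin 2, ∑ δ : Fin 2,
        (christoffel (fun q => χ (Y q)) (θ s) ν β δ - christoffel Y (θ s) ν β δ)
          * deriv (fun u => θ u β) s * deriv (fun u => θ u δ) s with hDdef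
    have hα : ∀ α : Fin 2, D 0 * g 0 α + D 1 * g 1 α = 0 := by
      intro α
      have := h s (Pi.single α 1)
      simp only [Fin.sum_univ_two, LtensorChristoffel, hDdef, hgdef] at this ⊢
      fin_cases α <;> norm_num [Pi.single_apply] at this ⊢ <;> linear_combination this
    have hvm : Matrix.vecMul D g = 0 := by
      funext α
      have := hα α
      simp only [Matrix.vecMul, dotProduct, Fin.sum_univ_two, Pi.zero_apply]
      linarith
    have hdet : g.det ≠ 0 := (hg (θ s)).det_pos.ne'
    have hD0 : D = 0 := by
      have h2 : Matrix.vecMul (Matrix.vecMul D g) g⁻¹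
          = Matrix.vecMul (0 : Fin 2 → ℝ) g⁻¹ := by rw [hvm]
      rwa [Matrix.vecMul_vecMul, Matrix.mul_nonsing_inv g hdet.isUnit, Matrix.vecMul_one,
        Matrix.zero_vecMul] at h2
    have hDμ : D μ = 0 := by rw [hD0]; rfl
    have h2 := hgeo s μ
    simp only [hDdef, Fin.sum_univ_two] at hDμ h2 ⊢
    linear_combination h2 + hDμ
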